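/- Let L(x,v) = (1/2)⟨Av, v⟩ with A a symmetric positive definite n×n matrix with smallest eigenvalue κ > 0, so A_t(x,y) = (1/(2t))⟨A(y-x), y-x⟩. Let u : ℝⁿ → ℝ be semiconcave with constant C. If 0 < t ≤ κ/C, then the sup-convolution T̆_t u and u have the same critical points and the same critical values: 0 ∈ D⁺u(x) if and only if the maximizer in the definition of T̆_t u(x) equals x, in which case T̆_t u(x) = u(x). -/

import Mathlib

open scoped RealInnerProductSpace
open Filter

/-- The (Dini) superdifferential of `u` at `x`. -/
def superdiff {n : ℕ} (u : EuclideanSpace ℝ (Fin n) → ℝ) (x : EuclideanSpace ℝ (Fin n)) :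
    Set (EuclideanSpace ℝ (Fin n)) :=
  {p | Filter.limsup (fun y => (u y - u x - ⟪p, y - x⟫) / ‖y - x‖) (nhdsWithin x {x}ᶜ) ≤ 0}

/-- `u` is semiconcave (with linear modulus) with constant `C`. -/
def Semiconcave {n : ℕ} (u : EuclideanSpace ℝ (Fin n) → ℝ) (C : ℝ) : Prop :=
  ∀ x y : EuclideanSpace ℝ (Fin n), ∀ l : ℝ, l ∈ Set.Icc (0 : ℝ) 1 →
    l * u x + (1 - l) * u y - u (l • x + (1 - l) • y) ≤ C / 2 * l * (1 - l) * ‖x - y‖ ^ 2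

/-! Semiconcavity makes `u - C/2 ‖·‖²` concave, hence locally Lipschitz, so the difference
quotients of `u` at `x` are bounded above and `0 ∈ D⁺u(x)` gives `u z - u x = o(‖z - x‖)`.
Applying the semiconcavity inequality on a short initial piece of the segment `[x, y]` then yields
the global bound `u y ≤ u x + C/2 ‖y - x‖²`. For `t ≤ κ / C` the penalty `⟪A(y - x), y - x⟫ / (2t)`
dominates `C/2 ‖y - x‖²`, so `x` maximizes `y ↦ u y - ⟪A(y - x), y - x⟫ / (2t)`. Conversely, if `x`
is a maximizer then `u y - u x = O(‖y - x‖²)`, so `0 ∈ D⁺u(x)`. -/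

open Set Topology

lemma Filter.limsup_nonpos_of_forall_eventually_le {α : Type*} {l : Filter α} {f : α → ℝ}
    (h : ∀ ε > 0, ∀ᶠ a in l, f a ≤ ε) : limsup f l ≤ 0 := by
  rw [limsup_eq]
  -- if the set below is not bounded below, its `sInf` is the junk value `0`
  by_cases hbdd : BddBelow {a | ∀ᶠ y in l, f y ≤ a}
  · exact le_of_forall_pos_le_add fun ε hε => by simpa using csInf_le hbdd (h ε hε)
  · rw [Real.sInf_of_not_bddBelow hbdd]

lemma LocallyLipschitz.isBoundedUnder_le_slope {E : Type*} [NormedAddCommGroup E] {f : E → ℝ}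
    (hf : LocallyLipschitz f) (x : E) :
    IsBoundedUnder (· ≤ ·) (𝓝[≠] x) fun y => (f y - f x) / ‖y - x‖ := by
  obtain ⟨K, s, hs, hK⟩ := hf x
  refine ⟨K, eventually_map.mpr ?_⟩
  filter_upwards [mem_nhdsWithin_of_mem_nhds hs, self_mem_nhdsWithin] with y hy hyx
  have hpos : 0 < ‖y - x‖ := norm_pos_iff.mpr (sub_ne_zero.mpr hyx)
  rw [div_le_iff₀ hpos]
  calc f y - f x ≤ dist (f y) (f x) := le_abs_self _
    _ ≤ K * dist y x := hK.dist_le_mul y hy x (mem_of_mem_nhds hs)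
    _ = K * ‖y - x‖ := by rw [dist_eq_norm]

lemma ContinuousLinearMap.inner_apply_self_le_opNorm_mul_sq {E : Type*} [NormedAddCommGroup E]
    [InnerProductSpace ℝ E] (A : E →L[ℝ] E) (v : E) : ⟪A v, v⟫ ≤ ‖A‖ * ‖v‖ ^ 2 :=
  calc ⟪A v, v⟫ ≤ ‖A v‖ * ‖v‖ := real_inner_le_norm _ _
    _ ≤ ‖A‖ * ‖v‖ * ‖v‖ := by gcongr; exact A.le_opNorm v
    _ = ‖A‖ * ‖v‖ ^ 2 := by ring

section

variable {n : ℕ} {u : EuclideanSpace ℝ (Fin n) → ℝ} {x : EuclideanSpace ℝ (Fin n)}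

lemma zero_mem_superdiff_of_le_mul_norm_sq (M : ℝ) (h : ∀ y, u y - u x ≤ M * ‖y - x‖ ^ 2) :
    0 ∈ superdiff u x := by
  simp only [superdiff, mem_ofPred_eq, inner_zero_left, sub_zero]
  refine limsup_nonpos_of_forall_eventually_le fun ε hε => ?_
  have hsmall : Tendsto (fun y => M * ‖y - x‖) (𝓝[≠] x) (𝓝 0) := by
    have hcont : Continuous fun y => M * ‖y - x‖ := by fun_prop
    simpa using (hcont.tendsto x).mono_left nhdsWithin_le_nhds
  filter_upwards [hsmall.eventually_lt_const hε, self_mem_nhdsWithin] with y hy hyx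
  have hpos : 0 < ‖y - x‖ := norm_pos_iff.mpr (sub_ne_zero.mpr hyx)
  rw [div_le_iff₀ hpos]
  nlinarith [h y]

variable {C : ℝ}

lemma Semiconcave.strongConcaveOn (hu : Semiconcave u C) : StrongConcaveOn univ (-C) u := by
  refine ⟨convex_univ, fun p _ q _ a b ha hb hab => ?_⟩
  obtain rfl : b = 1 - a := by linarith
  have := hu p q a ⟨ha, by linarith⟩
  simp only [smul_eq_mul]
  linarith

lemma Semiconcave.locallyLipschitz (hu : Semiconcave u C) : LocallyLipschitz u := by
  have hconc := strongConcaveOn_iff_convex.mp hu.strongConcaveOn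
  have hsq : LocallyLipschitz fun y : EuclideanSpace ℝ (Fin n) => -C / 2 * ‖y‖ ^ 2 :=
    ((contDiff_norm_sq ℝ).const_smul (-C / 2)).locallyLipschitz
  simpa using hconc.locallyLipschitz.sub hsq

lemma Semiconcave.le_add_of_zero_mem_superdiff (hC : 0 ≤ C) (hu : Semiconcave u C)
    (h : 0 ∈ superdiff u x) (y : EuclideanSpace ℝ (Fin n)) :
    u y ≤ u x + C / 2 * ‖y - x‖ ^ 2 := by
  rcases eq_or_ne y x with rfl | hyx
  · simp
  have hs : 0 < ‖y - x‖ := norm_pos_iff.mpr (sub_ne_zero.mpr hyx)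
  simp only [superdiff, mem_ofPred_eq, inner_zero_left, sub_zero] at h
  -- the slopes must be bounded above, or the `limsup` in `h` would be the junk value `0`
  have hslope : ∀ ε > 0, ∀ᶠ z in 𝓝[≠] x, u z - u x < ε * ‖z - x‖ := fun ε hε => by
    filter_upwards [eventually_lt_of_limsup_lt (h.trans_lt hε)
      (hu.locallyLipschitz.isBoundedUnder_le_slope x), self_mem_nhdsWithin] with z hz hzx
    rwa [div_lt_iff₀ (norm_pos_iff.mpr (sub_ne_zero.mpr hzx))] at hz
  set z : ℝ → EuclideanSpace ℝ (Fin n) := fun l => l • y + (1 - l) • x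
  have hzx : ∀ l, z l - x = l • (y - x) := fun l => by
    simp only [z, sub_smul, one_smul, smul_sub]; abel
  have hz : Tendsto z (𝓝[>] 0) (𝓝[≠] x) := by
    refine tendsto_nhdsWithin_of_tendsto_nhds_of_eventually_within _ ?_ ?_
    · have hcont : Continuous z := by fun_prop
      simpa [z] using (hcont.tendsto 0).mono_left nhdsWithin_le_nhds
    · filter_upwards [self_mem_nhdsWithin] with l (hl : 0 < l)
      rw [mem_compl_singleton_iff, ← sub_ne_zero, hzx]
      exact smul_ne_zero hl.ne' (sub_ne_zero.mpr hyx)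
  refine le_of_forall_pos_le_add fun δ hδ => ?_
  obtain ⟨l, hlt, hl0, hl1⟩ := ((hz.eventually (hslope (δ / ‖y - x‖) (by positivity))).and
    (Ioo_mem_nhdsGT one_pos)).exists
  have hsc := hu y x l ⟨hl0.le, hl1.le⟩
  have hzl : ‖z l - x‖ = l * ‖y - x‖ := by rw [hzx, norm_smul, Real.norm_of_nonneg hl0.le]
  rw [hzl, show δ / ‖y - x‖ * (l * ‖y - x‖) = l * δ by field_simp] at hlt
  have hquad : 0 ≤ C / 2 * l * l * ‖y - x‖ ^ 2 := by positivity
  have hscaled : l * (u y - u x) ≤ l * (C / 2 * ‖y - x‖ ^ 2 + δ) := by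
    simp only [z] at hlt
    linarith
  linarith [le_of_mul_le_mul_left hscaled hl0]

end

theorem stmt9_general {n : ℕ} (A : EuclideanSpace ℝ (Fin n) →L[ℝ] EuclideanSpace ℝ (Fin n))
    (κ : ℝ) (hcoer : ∀ v, κ * ‖v‖ ^ 2 ≤ ⟪A v, v⟫)
    (u : EuclideanSpace ℝ (Fin n) → ℝ) (C : ℝ) (hC : 0 < C) (hu : Semiconcave u C)
    (t : ℝ) (ht : 0 < t) (ht' : t ≤ κ / C) (x : EuclideanSpace ℝ (Fin n)) :
    (0 ∈ superdiff u x ↔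
      IsMaxOn (fun y => u y - 1 / (2 * t) * ⟪A (y - x), y - x⟫) Set.univ x) ∧
    (0 ∈ superdiff u x →
      sSup (Set.range fun y => u y - 1 / (2 * t) * ⟪A (y - x), y - x⟫) = u x) := by
  have hcenter : u x - 1 / (2 * t) * ⟪A (x - x), x - x⟫ = u x := by simp
  have hpenalty : ∀ v, C / 2 * ‖v‖ ^ 2 ≤ 1 / (2 * t) * ⟪A v, v⟫ := fun v => by
    have hCt : C * t ≤ κ := by rwa [le_div_iff₀ hC, mul_comm] at ht'
    have hcoer' : C * t * ‖v‖ ^ 2 ≤ ⟪A v, v⟫ := by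
      grw [hCt]
      exact hcoer v
    rw [one_div_mul_eq_div, le_div_iff₀ (by positivity)]
    linarith
  have hcrit : 0 ∈ superdiff u x ↔
      IsMaxOn (fun y => u y - 1 / (2 * t) * ⟪A (y - x), y - x⟫) univ x := by
    rw [isMaxOn_univ_iff, hcenter]
    constructor
    · intro h y
      linarith [hu.le_add_of_zero_mem_superdiff hC.le h y, hpenalty (y - x)]
    · intro h
      refine zero_mem_superdiff_of_le_mul_norm_sq (1 / (2 * t) * ‖A‖) fun y => ?_
      have hA : 1 / (2 * t) * ⟪A (y - x), y - x⟫ ≤ 1 / (2 * t) * (‖A‖ * ‖y - x‖ ^ 2) := by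
        gcongr
        exact A.inner_apply_self_le_opNorm_mul_sq (y - x)
      linarith [h y]
  refine ⟨hcrit, fun h => ?_⟩
  have hmax := isMaxOn_univ_iff.mp (hcrit.mp h)
  exact (IsGreatest.csSup_eq ⟨mem_range_self x, forall_mem_range.mpr hmax⟩).trans hcenter

theorem stmt9 {n : ℕ} (A : EuclideanSpace ℝ (Fin n) →L[ℝ] EuclideanSpace ℝ (Fin n))
    (hsymm : ∀ v w, ⟪A v, w⟫ = ⟪v, A w⟫)
    (κ : ℝ) (hκ : 0 < κ) (hcoer : ∀ v, κ * ‖v‖ ^ 2 ≤ ⟪A v, v⟫)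
    (hκmin : ∃ v : EuclideanSpace ℝ (Fin n), v ≠ 0 ∧ ⟪A v, v⟫ = κ * ‖v‖ ^ 2)
    (u : EuclideanSpace ℝ (Fin n) → ℝ) (C : ℝ) (hC : 0 < C) (hu : Semiconcave u C)
    (t : ℝ) (ht : 0 < t) (ht' : t ≤ κ / C) (x : EuclideanSpace ℝ (Fin n)) :
    (0 ∈ superdiff u x ↔
      IsMaxOn (fun y => u y - 1 / (2 * t) * ⟪A (y - x), y - x⟫) Set.univ x) ∧
    (0 ∈ superdiff u x →
      sSup (Set.range fun y => u y - 1 / (2 * t) * ⟪A (y - x), y - x⟫) = u x) :=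
  stmt9_general A κ hcoer u C hC hu t ht ht' x
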